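/- Let n ≥ 1 and let G be a chordal simple graph on the vertex set {1, …, n} with maximal cliques C₁, …, C_T (a clique is maximal if it is not contained in any other clique of G). Let X be an n × n real symmetric matrix such that for every t ∈ {1, …, T} the principal submatrix of X with rows and columns indexed by C_t is positive semidefinite. Then there exists an n × n real positive semidefinite matrix Y with Y[i,i] = X[i,i] for every vertex i and Y[i,j] = X[i,j] for every edge (i,j) of G; that is, X is positive-semidefinite-completable in the edge set of G. -/

import Mathlib

/-- A simple graph is *chordal* if every cycle of length at least 4
(a sequence of pairwise distinct vertices, cyclically consecutively adjacent)
has a chord, i.e. an edge of the graph joining two non-consecutive vertices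
of the cycle. Cycles of length `≥ 4` are indexed by `Fin (k + 4)`, with
cyclic (mod `k + 4`) successor `i + 1`. -/
def SimpleGraph.IsChordal {V : Type*} (G : SimpleGraph V) : Prop :=
  ∀ (k : ℕ) (v : Fin (k + 4) → V), Function.Injective v →
    (∀ i : Fin (k + 4), G.Adj (v i) (v (i + 1))) →
    ∃ i j : Fin (k + 4), i ≠ j ∧ j ≠ i + 1 ∧ i ≠ j + 1 ∧ G.Adj (v i) (v j)

/-- A *maximal clique* of `G` is a clique not contained in any other clique of `G`. -/
def SimpleGraph.IsMaximalClique {V : Type*} (G : SimpleGraph V)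
    (C : Finset V) : Prop :=
  G.IsClique (C : Set V) ∧
    ∀ D : Finset V, G.IsClique (D : Set V) → C ⊆ D → C = D

/-!
A chordal graph has a simplicial vertex (Dirac). For non-adjacent `x, y`, a minimal `x`–`y`
separator `S` is a clique: for non-adjacent `s, t ∈ S`, shortest `s`–`t` paths through the
components of `x` and of `y` would close up to a chordless cycle of length at least four. By
induction each of these two components then contains a vertex that is simplicial in the whole graph.

Remove a simplicial vertex `v` and complete the rest by induction to a PSD matrix `Y`. Since `v`
and its neighbourhood `S` form a clique, `X` is PSD on `{v} ∪ S`; so the border `X v` restricted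
to `S` is `Y u` restricted to `S` for some `u` with `uᵀ Y u ≤ X v v`, and bordering `Y` by the row
`Y u` and the corner `X v v` keeps it PSD.
-/

open Matrix

section PosSemidefExtension

variable {n ι : Type*} [Fintype n]

theorem Matrix.PosSemidef.dotProduct_mulVec_gram [Fintype ι] {Y : Matrix n n ℝ}
    (hY : Y.PosSemidef) (f : ι → n → ℝ) : (of fun i j => f i ⬝ᵥ Y *ᵥ f j).PosSemidef := by
  convert hY.conjTranspose_mul_mul_same (of fun k j => f j k) using 1
  ext i j
  simp only [of_apply, mul_apply, conjTranspose_apply, star_trivial, dotProduct, mulVec,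
    Finset.mul_sum, Finset.sum_mul]
  rw [Finset.sum_comm]
  exact Finset.sum_congr rfl fun _ _ => Finset.sum_congr rfl fun _ _ => by ring

theorem Matrix.dotProduct_mulVec_congr {R : Type*} [CommSemiring R] {A B : Matrix n n R}
    {S : Finset n} {z : n → R} (hz : ∀ i ∉ S, z i = 0) (hAB : ∀ i ∈ S, ∀ j ∈ S, A i j = B i j) :
    z ⬝ᵥ A *ᵥ z = z ⬝ᵥ B *ᵥ z := by
  simp only [dotProduct, mulVec, Finset.mul_sum]
  refine Finset.sum_congr rfl fun i _ => Finset.sum_congr rfl fun j _ => ?_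
  by_cases hi : i ∈ S
  · by_cases hj : j ∈ S
    · rw [hAB i hi j hj]
    · simp [hz j hj]
  · simp [hz i hi]

theorem Matrix.dotProduct_mulVec_nonneg_of_posSemidef_submatrix
    {X : Matrix n n ℝ} {C : Finset n} (hC : (X.submatrix ((↑) : C → n) (↑)).PosSemidef)
    {z : n → ℝ} (hz : ∀ i ∉ C, z i = 0) : 0 ≤ z ⬝ᵥ X *ᵥ z := by
  have hsum : ∀ f : n → ℝ, (∀ i ∉ C, f i = 0) → ∑ i : C, f i = ∑ i, f i := fun f hf => by
    rw [Finset.sum_coe_sort C f]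
    exact Finset.sum_subset (Finset.subset_univ C) fun i _ hi => hf i hi
  have := hC.dotProduct_mulVec_nonneg fun i => z i
  simp only [star_trivial, dotProduct, mulVec, submatrix_apply] at this
  have hinner : ∀ i : n, ∑ j : C, X i j * z j = ∑ j, X i j * z j :=
    fun i => hsum (fun j => X i j * z j) fun j hj => by simp [hz j hj]
  simp only [hinner] at this
  rwa [hsum (fun i => z i * ∑ j, X i j * z j) fun i hi => by simp [hz i hi]] at this

variable [DecidableEq n]

theorem Matrix.IsHermitian.exists_mulVec_eq {P : Matrix n n ℝ} (hP : P.IsHermitian) {b : n → ℝ}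
    (hb : ∀ u, P *ᵥ u = 0 → b ⬝ᵥ u = 0) : ∃ w, P *ᵥ w = b := by
  have hmem : WithLp.toLp 2 b ∈ LinearMap.range P.toEuclideanLin := by
    rw [← Submodule.orthogonal_orthogonal (LinearMap.range _),
      (isSymmetric_toEuclideanLin_iff.mpr hP).orthogonal_range]
    intro u hu
    simp only [LinearMap.mem_ker, toEuclideanLin, toLpLin_apply, WithLp.toLp_eq_zero] at hu
    simp [EuclideanSpace.inner_eq_star_dotProduct, hb _ hu]
  obtain ⟨w, hw⟩ := hmem
  exact ⟨w.ofLp, by simpa [toEuclideanLin] using congrArg WithLp.ofLp hw⟩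

theorem Matrix.PosSemidef.exists_mulVec_eq_on {Y : Matrix n n ℝ} (hY : Y.PosSemidef)
    (S : Finset n) {a : ℝ} {b : n → ℝ}
    (h : ∀ (s : ℝ) (w : n → ℝ), (∀ i ∉ S, w i = 0) →
      0 ≤ a * s ^ 2 + 2 * s * (b ⬝ᵥ w) + w ⬝ᵥ Y *ᵥ w) :
    ∃ u : n → ℝ, (∀ i ∈ S, (Y *ᵥ u) i = b i) ∧ u ⬝ᵥ Y *ᵥ u ≤ a := by
  -- `D b` is orthogonal to the kernel of the compression `D * Y * D`, hence in its range.
  set D : Matrix n n ℝ := diagonal fun i => if i ∈ S then 1 else 0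
  have hD : ∀ w, ∀ i ∉ S, (D *ᵥ w) i = 0 := fun w i hi => by simp [D, mulVec_diagonal, hi]
  have hDsymm : ∀ x y, x ⬝ᵥ D *ᵥ y = (D *ᵥ x) ⬝ᵥ y := fun x y => by
    simp only [dotProduct, D, mulVec_diagonal]
    exact Finset.sum_congr rfl fun _ _ => by ring
  have hP : (D * Y * D).PosSemidef := by
    simpa [D] using hY.conjTranspose_mul_mul_same D
  have hquad : ∀ w, w ⬝ᵥ (D * Y * D) *ᵥ w = (D *ᵥ w) ⬝ᵥ Y *ᵥ (D *ᵥ w) := fun w => by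
    rw [← mulVec_mulVec, ← mulVec_mulVec, hDsymm]
  have hker : ∀ u, (D * Y * D) *ᵥ u = 0 → (D *ᵥ b) ⬝ᵥ u = 0 := by
    intro u hu
    have hzero : (D *ᵥ u) ⬝ᵥ Y *ᵥ (D *ᵥ u) = 0 := by rw [← hquad, hu, dotProduct_zero]
    have hlin : ∀ r : ℝ, 0 ≤ a + 2 * r * (b ⬝ᵥ D *ᵥ u) := fun r => by
      have := h 1 (r • D *ᵥ u) fun i hi => by simp [hD u i hi]
      simp only [mulVec_smul, dotProduct_smul, smul_dotProduct, hzero, smul_eq_mul] at this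
      linarith
    rw [← hDsymm]
    by_contra hne
    have := hlin (-(a + 1) / (2 * (b ⬝ᵥ D *ᵥ u)))
    field_simp at this
    linarith
  obtain ⟨w, hw⟩ := hP.isHermitian.exists_mulVec_eq hker
  refine ⟨D *ᵥ w, fun i hi => ?_, ?_⟩
  · simpa [← mulVec_mulVec, D, mulVec_diagonal, hi] using congrFun hw i
  · have hβ : (D *ᵥ w) ⬝ᵥ Y *ᵥ (D *ᵥ w) = b ⬝ᵥ D *ᵥ w := by
      rw [← hquad, hw, hDsymm, dotProduct_comm]
    have := h 1 (-(D *ᵥ w)) fun i hi => by simp [hD w i hi]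
    simp only [mulVec_neg, dotProduct_neg, neg_dotProduct, neg_neg, hβ] at this
    linarith

theorem Matrix.PosSemidef.exists_posSemidef_border {Y : Matrix n n ℝ} (hY : Y.PosSemidef)
    (v : n) (u : n → ℝ) {a : ℝ} (ha : u ⬝ᵥ Y *ᵥ u ≤ a) :
    ∃ Z : Matrix n n ℝ, Z.PosSemidef ∧ (∀ i j, i ≠ v → j ≠ v → Z i j = Y i j) ∧
      Z v v = a ∧ ∀ j, j ≠ v → Z v j = (Y *ᵥ u) j ∧ Z j v = (Y *ᵥ u) j := by
  -- `Y` pulled back along the substitution `Pi.single v 1 ↦ u`, plus the slack at `(v, v)`.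
  set f : n → n → ℝ := Function.update (fun j => Pi.single j 1) v u
  have hYu : Y *ᵥ u = u ᵥ* Y := by
    rw [← vecMul_transpose, show Yᵀ = Y from hY.isHermitian]
  refine ⟨of (fun i j => f i ⬝ᵥ Y *ᵥ f j) + diagonal (Pi.single v (a - u ⬝ᵥ Y *ᵥ u)),
    (hY.dotProduct_mulVec_gram f).add
      (posSemidef_diagonal_iff.mpr fun i => ?_), fun i j hi hj => ?_, ?_, fun j hj => ?_⟩
  · rcases eq_or_ne i v with rfl | hi
    · simpa using ha
    · simp [hi]
  · simp [f, hi, hj, diagonal_apply]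
  · simp [f]
  · simp only [add_apply, of_apply, diagonal_apply, f, Function.update_self, ne_eq, hj,
      not_false_eq_true, Function.update_of_ne, mulVec_single_one, single_one_dotProduct,
      Ne.symm hj, if_false, add_zero, hYu]
    exact ⟨rfl, trivial⟩

theorem Matrix.PosSemidef.exists_extend_vertex {X Y : Matrix n n ℝ} (hY : Y.PosSemidef)
    (hX : X.IsSymm) {v : n} {S : Finset n}
    (hXS : ∀ z : n → ℝ, (∀ i ∉ insert v S, z i = 0) → 0 ≤ z ⬝ᵥ X *ᵥ z)
    (hYX : ∀ i ∈ S, ∀ j ∈ S, Y i j = X i j) :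
    ∃ Z : Matrix n n ℝ, Z.PosSemidef ∧ (∀ i j, i ≠ v → j ≠ v → Z i j = Y i j) ∧
      ∀ i ∈ insert v S, ∀ j ∈ insert v S, Z i j = X i j := by
  have hborder : ∀ (s : ℝ) (w : n → ℝ), (∀ i ∉ S, w i = 0) →
      0 ≤ X v v * s ^ 2 + 2 * s * (X.row v ⬝ᵥ w) + w ⬝ᵥ Y *ᵥ w := by
    intro s w hw
    have hz : ∀ i ∉ insert v S, (Pi.single v s + w : n → ℝ) i = 0 := fun i hi => by
      rw [Finset.mem_insert, not_or] at hi
      simp [hi.1, hw i hi.2]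
    have hsymm : w ⬝ᵥ X *ᵥ Pi.single v s = s * (X.row v ⬝ᵥ w) := by
      simp only [dotProduct, Finset.mul_sum]
      refine Finset.sum_congr rfl fun i _ => ?_
      simp only [mulVec, dotProduct_single, row_apply, hX.apply v i]
      ring
    rw [dotProduct_mulVec_congr hw hYX]
    convert hXS _ hz using 1
    have hrow : (X *ᵥ w) v = X.row v ⬝ᵥ w := rfl
    simp only [mulVec_add, dotProduct_add, add_dotProduct, single_dotProduct, hsymm, hrow]
    simp only [mulVec, dotProduct_single]
    ring
  obtain ⟨u, hu, hua⟩ := hY.exists_mulVec_eq_on S hborder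
  obtain ⟨Z, hZ, hZY, hZvv, hZv⟩ := hY.exists_posSemidef_border v u hua
  refine ⟨Z, hZ, hZY, fun i hi j hj => ?_⟩
  have hS : ∀ k ∈ insert v S, k ≠ v → k ∈ S := fun k hk hkv =>
    (Finset.mem_insert.mp hk).resolve_left hkv
  by_cases hiv : i = v <;> by_cases hjv : j = v
  · rw [hiv, hjv, hZvv]
  · rw [hiv, (hZv j hjv).1, hu j (hS j hj hjv), row_apply]
  · rw [hjv, (hZv i hiv).2, hu i (hS i hi hiv), row_apply, hX.apply]
  · rw [hZY i j hiv hjv, hYX i (hS i hi hiv) j (hS j hj hjv)]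

end PosSemidefExtension

namespace SimpleGraph

variable {V : Type*} {G : SimpleGraph V}

/- Paths and cycles are indexed by `ℕ`; the single condition on pairs
`c i = c j ∨ G.Adj (c i) (c j)` says at once that vertices are distinct and there are no chords. -/
def IsInducedPath (G : SimpleGraph V) (L : ℕ) (p : ℕ → V) : Prop :=
  (∀ i < L, G.Adj (p i) (p (i + 1))) ∧
    ∀ i j, i < j → j ≤ L → (p i = p j ∨ G.Adj (p i) (p j)) → j = i + 1

theorem IsInducedPath.ne {L : ℕ} {p : ℕ → V} (hp : G.IsInducedPath L p) {i j : ℕ} (hij : i < j)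
    (hj : j ≤ L) : p i ≠ p j := fun heq => by
  obtain rfl := hp.2 i j hij hj (.inl heq)
  exact (hp.1 i hj).ne heq

theorem Reachable.exists_isInducedPath {x y : V} (h : G.Reachable x y) :
    ∃ L p, p 0 = x ∧ p L = y ∧ G.IsInducedPath L p := by
  -- A shortest walk: a repeated vertex or a chord would shortcut it.
  obtain ⟨w, hw⟩ := h.exists_walk_length_eq_dist
  have hshort : ∀ i j, j ≤ w.length → ∀ q : G.Walk (w.getVert i) (w.getVert j),
      j ≤ i + q.length := fun i j hj q => by
    have := dist_le ((w.take i).append (q.append (w.drop j)))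
    simp only [Walk.length_append, Walk.take_length, Walk.drop_length, ← hw] at this
    omega
  refine ⟨w.length, w.getVert, w.getVert_zero, w.getVert_length,
    fun i hi => w.adj_getVert_succ hi, fun i j hij hj h => ?_⟩
  rcases h with heq | hadj
  · have := hshort i j hj (Walk.nil.copy rfl heq)
    simp only [Walk.length_copy, Walk.length_nil] at this
    omega
  · have := hshort i j hj hadj.toWalk
    simp only [Adj.toWalk, Walk.length_cons, Walk.length_nil] at this
    omega

def IsInducedCycle (G : SimpleGraph V) (n : ℕ) (c : ℕ → V) : Prop :=
  c n = c 0 ∧ (∀ i < n, G.Adj (c i) (c (i + 1))) ∧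
    ∀ i j, i < j → j < n → (c i = c j ∨ G.Adj (c i) (c j)) → j = i + 1 ∨ (i = 0 ∧ j + 1 = n)

theorem IsChordal.not_isInducedCycle (hG : G.IsChordal) {n : ℕ} (hn : 4 ≤ n) (c : ℕ → V) :
    ¬G.IsInducedCycle n c := by
  rintro ⟨hcyc, hadj, hind⟩
  obtain ⟨k, rfl⟩ : ∃ k, n = k + 4 := ⟨n - 4, by omega⟩
  have hval : ∀ i : Fin (k + 4),
      ((i + 1 : Fin (k + 4)) : ℕ) = if (i : ℕ) = k + 3 then 0 else (i : ℕ) + 1 := fun i => by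
    simp [Fin.val_add_one, Fin.ext_iff]
  have hsucc : ∀ i : Fin (k + 4), c (i + 1 : Fin (k + 4)) = c (i + 1) := fun i => by
    rw [hval]
    split_ifs with h
    · rw [h, hcyc]
    · rfl
  have hne : ∀ i j, i < j → j < k + 4 → c i ≠ c j := fun i j hij hj heq => by
    rcases hind i j hij hj (.inl heq) with rfl | ⟨rfl, hl⟩
    · exact (hadj i (by omega)).ne heq
    · exact (hadj j hj).ne (by rw [hl, hcyc, heq])
  have hinj : Function.Injective fun i : Fin (k + 4) => c i := fun i j h => by
    rcases lt_trichotomy i.val j.val with hij | hij | hij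
    · exact absurd h (hne _ _ hij j.2)
    · exact Fin.ext hij
    · exact absurd h.symm (hne _ _ hij i.2)
  have hchordless : ∀ i j : Fin (k + 4), i.val < j.val → j ≠ i + 1 → i ≠ j + 1 →
      ¬G.Adj (c i) (c j) := fun i j hij h1 h2 hij' => by
    rcases hind i j hij j.2 (.inr hij') with h | ⟨h0, hl⟩
    · exact h1 (Fin.ext (by rw [hval]; split_ifs <;> omega))
    · exact h2 (Fin.ext (by rw [hval]; split_ifs <;> omega))
  obtain ⟨i, j, hij, h1, h2, hadjij⟩ :=
    hG k (fun i => c i) hinj fun i => by simpa only [hsucc] using hadj i i.2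
  rcases lt_or_gt_of_ne (Fin.val_ne_of_ne hij) with h | h
  · exact hchordless i j h h1 h2 hadjij
  · exact hchordless j i h h2 h1 hadjij.symm

theorem IsInducedPath.isInducedCycle_append {Lp Lq : ℕ} {p q : ℕ → V}
    (hp : G.IsInducedPath Lp p) (hq : G.IsInducedPath Lq q) (h0 : p 0 = q 0) (hL : p Lp = q Lq)
    (hLq : 0 < Lq) (hsep : ∀ i j, 0 < i → i < Lp → 0 < j → j < Lq →
      p i ≠ q j ∧ ¬G.Adj (p i) (q j)) :
    G.IsInducedCycle (Lp + Lq) fun m => if m ≤ Lp then p m else q (Lp + Lq - m) := by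
  set c : ℕ → V := fun m => if m ≤ Lp then p m else q (Lp + Lq - m)
  have hcp : ∀ m ≤ Lp, c m = p m := fun m hm => if_pos hm
  have hcq : ∀ m, Lp ≤ m → c m = q (Lp + Lq - m) := fun m hm => by
    rcases hm.eq_or_lt with rfl | hm
    · rw [hcp Lp le_rfl, hL, Nat.add_sub_cancel_left]
    · exact if_neg hm.not_ge
  have hqsymm : ∀ i j, (q i = q j ∨ G.Adj (q i) (q j)) → (q j = q i ∨ G.Adj (q j) (q i)) :=
    fun i j => Or.imp Eq.symm Adj.symm
  refine ⟨by rw [hcq _ (by omega), Nat.sub_self, ← h0, hcp 0 (by omega)], fun i hi => ?_,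
    fun i j hij hj h => ?_⟩
  · rcases lt_or_ge i Lp with hiL | hiL
    · rw [hcp i hiL.le, hcp (i + 1) hiL]
      exact hp.1 i hiL
    · rw [hcq i hiL, hcq (i + 1) (by omega)]
      have := hq.1 (Lp + Lq - (i + 1)) (by omega)
      rw [show Lp + Lq - (i + 1) + 1 = Lp + Lq - i by omega] at this
      exact this.symm
  rcases le_or_gt j Lp with hjL | hjL
  · rw [hcp i (by omega), hcp j hjL] at h
    exact .inl (hp.2 i j hij hjL h)
  rcases le_or_gt Lp i with hiL | hiL
  · rw [hcq i hiL, hcq j hjL.le] at h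
    have := hq.2 _ _ (by omega) (by omega) (hqsymm _ _ h)
    exact .inl (by omega)
  rw [hcp i hiL.le, hcq j hjL.le] at h
  rcases Nat.eq_zero_or_pos i with rfl | hi0
  · rw [h0] at h
    have := hq.2 _ _ (by omega) (by omega) h
    exact .inr ⟨rfl, by omega⟩
  · have := hsep i (Lp + Lq - j) hi0 hiL (by omega) (by omega)
    exact absurd h (by tauto)

/-- Unlike `G.induce s`, this keeps the vertex type `V`. -/
def restrict (G : SimpleGraph V) (s : Set V) : SimpleGraph V where
  Adj x y := G.Adj x y ∧ x ∈ s ∧ y ∈ s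
  symm := ⟨fun _ _ h => ⟨h.1.symm, h.2.2, h.2.1⟩⟩
  loopless := ⟨fun _ h => h.1.ne rfl⟩

variable {R : Set V} {x y : V}

theorem Reachable.mem_of_restrict (h : (G.restrict R).Reachable x y) (hx : x ∈ R) : y ∈ R := by
  obtain ⟨w⟩ := h
  induction w with
  | nil => exact hx
  | cons hadj _ ih => exact ih hadj.2.2

theorem Reachable.restrict_of_closed {C : Set V} (h : G.Reachable x y) (hx : x ∈ C)
    (hC : ∀ a b, G.Adj a b → a ∈ C → b ∈ C) : (G.restrict C).Reachable x y := by
  obtain ⟨w⟩ := h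
  induction w with
  | nil => rfl
  | cons hadj _ ih =>
    have hadj' : (G.restrict C).Adj _ _ := ⟨hadj, hx, hC _ _ hadj hx⟩
    exact hadj'.reachable.trans (ih (hC _ _ hadj hx))

theorem Reachable.restrict_insert {a : V} (h : (G.restrict (insert a R)).Reachable x y)
    (hx : x ∈ R) :
    (G.restrict R).Reachable x y ∨ ∃ z, (G.restrict R).Reachable x z ∧ G.Adj z a := by
  obtain ⟨w⟩ := h
  induction w with
  | nil => exact .inl .rfl
  | @cons u u' _ hadj _ ih =>
    by_cases hu' : u' ∈ R
    · have hu : (G.restrict R).Adj u u' := ⟨hadj.1, hx, hu'⟩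
      exact (ih hu').imp hu.reachable.trans fun ⟨z, hz, hza⟩ => ⟨z, hu.reachable.trans hz, hza⟩
    · obtain rfl : u' = a := (hadj.2.2).resolve_right hu'
      exact .inr ⟨u, .rfl, hadj.1⟩

theorem ne_and_not_adj_of_not_reachable (hx : x ∈ R) (hy : y ∈ R)
    (hxy : ¬(G.restrict R).Reachable x y) {a b : V} (ha : (G.restrict R).Reachable x a)
    (hb : (G.restrict R).Reachable y b) : a ≠ b ∧ ¬G.Adj a b := by
  refine ⟨fun hab => hxy (ha.trans (hab ▸ hb.symm)), fun hab => hxy ?_⟩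
  have hab' : (G.restrict R).Adj a b := ⟨hab, ha.mem_of_restrict hx, hb.mem_of_restrict hy⟩
  exact ha.trans (hab'.reachable.trans hb.symm)

theorem exists_isInducedPath_through_component {s t : V} (hst : s ≠ t) (hadj : ¬G.Adj s t)
    (hs : ∃ z, (G.restrict R).Reachable x z ∧ G.Adj z s)
    (ht : ∃ z, (G.restrict R).Reachable x z ∧ G.Adj z t) :
    ∃ L p, p 0 = s ∧ p L = t ∧ 2 ≤ L ∧ G.IsInducedPath L p ∧
      ∀ i, 0 < i → i < L → (G.restrict R).Reachable x (p i) := by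
  obtain ⟨a, ha, has⟩ := hs
  obtain ⟨b, hb, hbt⟩ := ht
  set A := {z | (G.restrict R).Reachable x z}
  have hab : (G.restrict (insert s (insert t A))).Reachable s t := by
    have hA : ∀ u w, (G.restrict R).Adj u w → u ∈ A → w ∈ A := fun u w huw hu =>
      hu.trans huw.reachable
    have hmono : (G.restrict R).restrict A ≤ G.restrict (insert s (insert t A)) :=
      fun u w h => ⟨h.1.1, .inr (.inr h.2.1), .inr (.inr h.2.2)⟩
    have hsa : (G.restrict (insert s (insert t A))).Adj s a :=
      ⟨has.symm, .inl rfl, .inr (.inr ha)⟩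
    have hbt : (G.restrict (insert s (insert t A))).Adj b t :=
      ⟨hbt, .inr (.inr hb), .inr (.inl rfl)⟩
    exact hsa.reachable.trans
      ((((ha.symm.trans hb).restrict_of_closed ha hA).mono hmono).trans hbt.reachable)
  obtain ⟨L, p, hp0, hpL, hp⟩ := hab.exists_isInducedPath
  have hL : 0 < L := Nat.pos_of_ne_zero fun h => hst (by rw [← hp0, ← hpL, h])
  have hL2 : 2 ≤ L := by
    by_contra h
    obtain rfl : L = 1 := by omega
    exact hadj (by simpa [hp0, hpL] using (hp.1 0 hL).1)
  have hmem : ∀ i ≤ L, p i ∈ insert s (insert t A) := fun i hi => by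
    rcases hi.lt_or_eq with hi | rfl
    · exact (hp.1 i hi).2.1
    · simpa [Nat.sub_add_cancel hL] using (hp.1 (i - 1) (by omega)).2.2
  refine ⟨L, p, hp0, hpL, hL2, ⟨fun i hi => (hp.1 i hi).1, fun i j hij hj h =>
    hp.2 i j hij hj (h.imp_right fun h => ⟨h, hmem i (by omega), hmem j hj⟩)⟩,
    fun i hi0 hiL => ?_⟩
  rcases hmem i hiL.le with hi | hi | hi
  · exact absurd (hp0 ▸ hi) (hp.ne hi0 hiL.le).symm
  · exact absurd (hpL ▸ hi) (hp.ne hiL le_rfl)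
  · exact hi

theorem IsChordal.isClique_of_reachable_insert (hG : G.IsChordal) {S : Set V} (hx : x ∈ R)
    (hy : y ∈ R) (hxy : ¬(G.restrict R).Reachable x y)
    (hS : ∀ s ∈ S, (G.restrict (insert s R)).Reachable x y) : G.IsClique S := by
  intro s hs t ht hst
  by_contra hadj
  have hside : ∀ u ∈ S, (∃ z, (G.restrict R).Reachable x z ∧ G.Adj z u) ∧
      ∃ z, (G.restrict R).Reachable y z ∧ G.Adj z u := fun u hu =>
    ⟨((hS u hu).restrict_insert hx).resolve_left hxy,
      ((hS u hu).symm.restrict_insert hy).resolve_left fun h => hxy h.symm⟩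
  obtain ⟨Lp, p, hp0, hpL, hLp, hp, hpx⟩ :=
    exists_isInducedPath_through_component hst hadj (hside s hs).1 (hside t ht).1
  obtain ⟨Lq, q, hq0, hqL, hLq, hq, hqy⟩ :=
    exists_isInducedPath_through_component hst hadj (hside s hs).2 (hside t ht).2
  exact hG.not_isInducedCycle (by omega) _ (hp.isInducedCycle_append hq (hp0.trans hq0.symm)
    (hpL.trans hqL.symm) (by omega) fun i j hi0 hi hj0 hj =>
      ne_and_not_adj_of_not_reachable hx hy hxy (hpx i hi0 hi) (hqy j hj0 hj))

theorem exists_minimal_separator {W : Finset V} (hxy : x ≠ y) (hnadj : ¬G.Adj x y) :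
    ∃ S ⊆ W, x ∉ S ∧ y ∉ S ∧ ¬(G.restrict (↑W \ ↑S)).Reachable x y ∧
      ∀ s ∈ S, (G.restrict (insert s (↑W \ ↑S))).Reachable x y := by
  classical
  set seps := W.powerset.filter fun S : Finset V =>
    x ∉ S ∧ y ∉ S ∧ ¬(G.restrict (↑W \ ↑S)).Reachable x y
  have hnbr : W.filter (G.Adj x) ∈ seps := by
    refine Finset.mem_filter.mpr ⟨Finset.mem_powerset.mpr (Finset.filter_subset _ _), by simp,
      by simp [hnadj], fun ⟨w⟩ => ?_⟩
    cases w with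
    | nil => exact hxy rfl
    | cons h _ => exact h.2.2.2 (Finset.mem_filter.mpr ⟨h.2.2.1, h.1⟩)
  obtain ⟨S, hS, hmin⟩ := seps.exists_min_image Finset.card ⟨_, hnbr⟩
  obtain ⟨hSW, hxS, hyS, hsep⟩ := Finset.mem_filter.mp hS
  have hSW := Finset.mem_powerset.mp hSW
  refine ⟨S, hSW, hxS, hyS, hsep, fun s hs => ?_⟩
  by_contra h
  have hcoe : (↑W \ ↑(S.erase s) : Set V) = insert s (↑W \ ↑S) := by
    ext z
    by_cases hz : z = s <;> simp [hz, hSW hs]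
  have := hmin (S.erase s) (Finset.mem_filter.mpr ⟨Finset.mem_powerset.mpr
    ((Finset.erase_subset _ _).trans hSW), fun h' => hxS (Finset.mem_of_mem_erase h'),
    fun h' => hyS (Finset.mem_of_mem_erase h'), hcoe ▸ h⟩)
  exact (Finset.card_erase_lt_of_mem hs).not_ge this

theorem exists_simplicial_of_separator {W S : Finset V} (hSW : S ⊆ W)
    (hS : G.IsClique (S : Set V)) (hx : x ∈ W) (hxS : x ∉ S) (hy : y ∈ W) (hyS : y ∉ S)
    (hxy : ¬(G.restrict (↑W \ ↑S)).Reachable x y)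
    (ih : ∀ W' ⊂ W, G.IsClique (W' : Set V) ∨ ∃ a ∈ W', ∃ b ∈ W', a ≠ b ∧ ¬G.Adj a b ∧
      G.IsClique (G.neighborSet a ∩ W') ∧ G.IsClique (G.neighborSet b ∩ W')) :
    ∃ c, (G.restrict (↑W \ ↑S)).Reachable x c ∧ G.IsClique (G.neighborSet c ∩ W) := by
  classical
  set C := W.filter fun z => (G.restrict (↑W \ ↑S)).Reachable x z
  have hxC : x ∈ C := Finset.mem_filter.mpr ⟨hx, .rfl⟩
  have hnbr : ∀ c ∈ C, G.neighborSet c ∩ W ⊆ ↑(C ∪ S) := by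
    intro c hc z ⟨hcz, hzW⟩
    by_cases hzS : z ∈ S
    · simp [hzS]
    have hc' := (Finset.mem_filter.mp hc).2
    have hcz' : (G.restrict (↑W \ ↑S)).Adj c z :=
      ⟨hcz, hc'.mem_of_restrict ⟨hx, hxS⟩, hzW, hzS⟩
    exact Finset.mem_coe.mpr (Finset.mem_union_left _
      (Finset.mem_filter.mpr ⟨hzW, hc'.trans hcz'.reachable⟩))
  have hsub : C ∪ S ⊂ W := (Finset.ssubset_iff_of_subset
    (Finset.union_subset (Finset.filter_subset _ _) hSW)).mpr ⟨y, hy, by simp [hxy, hyS]⟩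
  rcases ih _ hsub with hcl | ⟨a, ha, b, hb, hab, hnadj, hsa, hsb⟩
  · exact ⟨x, .rfl, hcl.subset (hnbr x hxC)⟩
  have hlift : ∀ c ∈ C, G.IsClique (G.neighborSet c ∩ ↑(C ∪ S)) →
      ∃ d, (G.restrict (↑W \ ↑S)).Reachable x d ∧ G.IsClique (G.neighborSet d ∩ W) :=
    fun c hc hcl => ⟨c, (Finset.mem_filter.mp hc).2,
      hcl.subset fun z hz => Set.mem_inter hz.1 (hnbr c hc hz)⟩
  by_cases haC : a ∈ C
  · exact hlift a haC hsa
  by_cases hbC : b ∈ C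
  · exact hlift b hbC hsb
  simp only [Finset.mem_union, haC, hbC, false_or] at ha hb
  exact absurd (hS ha hb hab) hnadj

theorem IsChordal.isClique_or_exists_simplicial (hG : G.IsChordal) (W : Finset V) :
    G.IsClique (W : Set V) ∨ ∃ a ∈ W, ∃ b ∈ W, a ≠ b ∧ ¬G.Adj a b ∧
      G.IsClique (G.neighborSet a ∩ W) ∧ G.IsClique (G.neighborSet b ∩ W) := by
  induction W using Finset.strongInduction with | H W ih => ?_
  by_cases hW : G.IsClique (W : Set V)
  · exact .inl hW
  obtain ⟨x, hx, y, hy, hxy, hnadj⟩ : ∃ x ∈ W, ∃ y ∈ W, x ≠ y ∧ ¬G.Adj x y := by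
    simpa [IsClique, Set.Pairwise] using hW
  obtain ⟨S, hSW, hxS, hyS, hsep, hmin⟩ := exists_minimal_separator (W := W) hxy hnadj
  have hxR : x ∈ (↑W \ ↑S : Set V) := ⟨hx, hxS⟩
  have hyR : y ∈ (↑W \ ↑S : Set V) := ⟨hy, hyS⟩
  have hS := hG.isClique_of_reachable_insert hxR hyR hsep hmin
  obtain ⟨a, hxa, ha⟩ := exists_simplicial_of_separator hSW hS hx hxS hy hyS hsep ih
  obtain ⟨b, hyb, hb⟩ :=
    exists_simplicial_of_separator hSW hS hy hyS hx hxS (fun h => hsep h.symm) ih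
  obtain ⟨hab, hnadj⟩ := ne_and_not_adj_of_not_reachable hxR hyR hsep hxa hyb
  exact .inr ⟨a, (hxa.mem_of_restrict hxR).1, b, (hyb.mem_of_restrict hyR).1, hab, hnadj, ha, hb⟩

theorem IsChordal.exists_simplicial (hG : G.IsChordal) {W : Finset V} (hW : W.Nonempty) :
    ∃ v ∈ W, G.IsClique (G.neighborSet v ∩ W) := by
  obtain ⟨v, hv⟩ := hW
  rcases hG.isClique_or_exists_simplicial W with hcl | ⟨a, ha, -, -, -, -, hsa, -⟩
  · exact ⟨v, hv, hcl.subset Set.inter_subset_right⟩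
  · exact ⟨a, ha, hsa⟩

theorem exists_isMaximalClique_superset [Finite V] {C : Finset V} (hC : G.IsClique (C : Set V)) :
    ∃ D, G.IsMaximalClique D ∧ C ⊆ D := by
  obtain ⟨D, hCD, hD⟩ := (Set.toFinite {D : Finset V | G.IsClique (D : Set V)}).exists_le_maximal hC
  exact ⟨D, ⟨hD.1, fun D' hD' hDD' => le_antisymm hDD' (hD.2 hD' hDD')⟩, hCD⟩

theorem IsChordal.exists_posSemidef_completion [Fintype V] (hG : G.IsChordal)
    {X : Matrix V V ℝ} (hX : X.IsSymm)
    (hcl : ∀ C : Finset V, G.IsClique (C : Set V) →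
      ∀ z : V → ℝ, (∀ i ∉ C, z i = 0) → 0 ≤ z ⬝ᵥ X *ᵥ z) (W : Finset V) :
    ∃ Y : Matrix V V ℝ, Y.PosSemidef ∧ ∀ i ∈ W, ∀ j ∈ W, (i = j ∨ G.Adj i j) → Y i j = X i j := by
  classical
  induction W using Finset.strongInduction with | H W ih => ?_
  rcases W.eq_empty_or_nonempty with rfl | hW
  · exact ⟨0, .zero, by simp⟩
  obtain ⟨v, hvW, hv⟩ := hG.exists_simplicial hW
  obtain ⟨Y, hY, hYX⟩ := ih (W.erase v) (Finset.erase_ssubset hvW)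
  set S := (W.erase v).filter (G.Adj v)
  have hSnbr : (S : Set V) ⊆ G.neighborSet v ∩ W := fun k hk => by
    simp only [S, Finset.coe_filter, Finset.mem_erase] at hk
    exact ⟨hk.2, hk.1.2⟩
  have hSclique : G.IsClique (S : Set V) := hv.subset hSnbr
  have hins : ∀ k ∈ W, (k = v ∨ G.Adj v k) → k ∈ insert v S := by
    rintro k hk (rfl | hvk)
    · exact Finset.mem_insert_self _ _
    · exact Finset.mem_insert_of_mem
        (Finset.mem_filter.mpr ⟨Finset.mem_erase.mpr ⟨hvk.ne', hk⟩, hvk⟩)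
  have hvS : G.IsClique (insert v S : Finset V) := by
    rw [Finset.coe_insert]
    exact hSclique.insert fun k hk _ => (hSnbr hk).1
  obtain ⟨Z, hZ, hZY, hZX⟩ := hY.exists_extend_vertex hX (hcl _ hvS) fun i hi j hj =>
    hYX i (Finset.mem_of_mem_filter i hi) j (Finset.mem_of_mem_filter j hj)
      ((eq_or_ne i j).imp_right (hSclique hi hj))
  refine ⟨Z, hZ, fun i hi j hj hij => ?_⟩
  rcases eq_or_ne i v with rfl | hiv
  · exact hZX i (hins i hi (.inl rfl)) j (hins j hj (hij.imp Eq.symm id))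
  rcases eq_or_ne j v with rfl | hjv
  · exact hZX i (hins i hi (hij.imp id Adj.symm)) j (hins j hj (.inl rfl))
  rw [hZY i j hiv hjv]
  exact hYX i (Finset.mem_erase.mpr ⟨hiv, hi⟩) j (Finset.mem_erase.mpr ⟨hjv, hj⟩) hij

end SimpleGraph

theorem posSemidef_completion_of_maximal_clique_submatrices_posSemidef_general
    {n : ℕ} (G : SimpleGraph (Fin n)) (hG : G.IsChordal)
    (X : Matrix (Fin n) (Fin n) ℝ) (hX : X.IsSymm)
    (hcliques : ∀ C : Finset (Fin n), G.IsMaximalClique C →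
      (X.submatrix (Subtype.val : {i // i ∈ C} → Fin n)
        (Subtype.val : {i // i ∈ C} → Fin n)).PosSemidef) :
    ∃ Y : Matrix (Fin n) (Fin n) ℝ, Y.PosSemidef ∧
      (∀ i : Fin n, Y i i = X i i) ∧
      (∀ i j : Fin n, G.Adj i j → Y i j = X i j) := by
  have hcl : ∀ C : Finset (Fin n), G.IsClique (C : Set (Fin n)) →
      ∀ z : Fin n → ℝ, (∀ i ∉ C, z i = 0) → 0 ≤ z ⬝ᵥ X *ᵥ z := fun C hC z hz => by
    obtain ⟨D, hD, hCD⟩ := G.exists_isMaximalClique_superset hC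
    exact dotProduct_mulVec_nonneg_of_posSemidef_submatrix (hcliques D hD)
      fun i hi => hz i fun h => hi (hCD h)
  obtain ⟨Y, hY, hYX⟩ := hG.exists_posSemidef_completion hX hcl Finset.univ
  exact ⟨Y, hY, fun i => hYX i (Finset.mem_univ _) i (Finset.mem_univ _) (.inl rfl),
    fun i j h => hYX i (Finset.mem_univ _) j (Finset.mem_univ _) (.inr h)⟩

/-- If `G` is a chordal graph on `{1, …, n}` and `X` is a real symmetric `n × n`
matrix whose principal submatrix indexed by each maximal clique of `G` is
positive semidefinite, then `X` is positive-semidefinite-completable in the edge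
set of `G`: there is a PSD matrix `Y` agreeing with `X` on the diagonal and on
the edges of `G`. -/
theorem posSemidef_completion_of_maximal_clique_submatrices_posSemidef
    {n : ℕ} (hn : 1 ≤ n) (G : SimpleGraph (Fin n)) (hG : G.IsChordal)
    (X : Matrix (Fin n) (Fin n) ℝ) (hX : X.IsSymm)
    (hcliques : ∀ C : Finset (Fin n), G.IsMaximalClique C →
      (X.submatrix (Subtype.val : {i // i ∈ C} → Fin n)
        (Subtype.val : {i // i ∈ C} → Fin n)).PosSemidef) :
    ∃ Y : Matrix (Fin n) (Fin n) ℝ, Y.PosSemidef ∧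
      (∀ i : Fin n, Y i i = X i i) ∧
      (∀ i j : Fin n, G.Adj i j → Y i j = X i j) :=
  posSemidef_completion_of_maximal_clique_submatrices_posSemidef_general G hG X hX hcliques
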